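/- Let (M, N, U, V, ξ) be a gluing structure with U and V open, where M and N are Hausdorff and first-countable. Assume the structure is Hausdorff in the following sense: there is no sequence (p_n) of points of U such that (p_n) converges in M to a point of M \ U while (ξ(p_n)) converges in N to a point of N \ V. Then the glued space Q is a Hausdorff topological space. -/
import Mathlib


/-- A gluing structure: topological spaces `M`, `N`, subsets `U ⊆ M`, `V ⊆ N`,
and a homeomorphism `ξ : U → V` (subspace topologies). -/
structure GluingStructure (M N : Type*) [TopologicalSpace M] [TopologicalSpace N] where
  U : Set M
  V : Set N
  ξ : U ≃ₜ V

namespace GluingStructure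

variable {M N : Type*} [TopologicalSpace M] [TopologicalSpace N]

/-- The relation identifying each `u ∈ U` with `ξ u ∈ V` in the disjoint union. -/
def rel (G : GluingStructure M N) : M ⊕ N → M ⊕ N → Prop := fun a b =>
  ∃ u : G.U, a = Sum.inl (u : M) ∧ b = Sum.inr ((G.ξ u : G.V) : N)

/-- The glued space: the quotient of the disjoint union `M ⊕ N` by the equivalence
relation generated by `rel`, with the quotient topology. -/
abbrev Glued (G : GluingStructure M N) : Type _ := Quot G.rel

/-- The natural injection `M → Glued`. -/
def gi (G : GluingStructure M N) : M → G.Glued := fun m => Quot.mk G.rel (Sum.inl m)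

/-- The natural injection `N → Glued`. -/
def gj (G : GluingStructure M N) : N → G.Glued := fun n => Quot.mk G.rel (Sum.inr n)

end GluingStructure

namespace GluingStructure

variable {M N : Type*} [TopologicalSpace M] [TopologicalSpace N]

/-- Explicit description of the equivalence relation generated by `rel`. -/
def R (G : GluingStructure M N) : M ⊕ N → M ⊕ N → Prop := fun a b =>
  a = b ∨ G.rel a b ∨ G.rel b a

theorem eqvGen_iff (G : GluingStructure M N) {a b : M ⊕ N} :
    Relation.EqvGen G.rel a b ↔ G.R a b := by
  constructor
  · intro h
    induction h with
    | rel x y h => exact Or.inr (Or.inl h)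
    | refl x => exact Or.inl rfl
    | symm x y _ ih =>
      rcases ih with h | h | h
      · exact Or.inl h.symm
      · exact Or.inr (Or.inr h)
      · exact Or.inr (Or.inl h)
    | trans x y z _ _ ih1 ih2 =>
      rcases ih1 with h1 | h1 | h1
      · rwa [h1]
      · rcases ih2 with h2 | h2 | h2
        · rw [← h2]; exact Or.inr (Or.inl h1)
        · obtain ⟨u, hu1, hu2⟩ := h1
          obtain ⟨v, hv1, hv2⟩ := h2
          rw [hu2] at hv1; exact absurd hv1 (by simp)
        · obtain ⟨u, hu1, hu2⟩ := h1
          obtain ⟨v, hv1, hv2⟩ := h2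
          rw [hu2] at hv2
          have : v = u := by
            have : (G.ξ v : N) = (G.ξ u : N) := by
              exact Sum.inr.inj hv2.symm
            exact G.ξ.toEquiv.injective (Subtype.ext this)
          rw [hv1, this, hu1]; exact Or.inl rfl
      · rcases ih2 with h2 | h2 | h2
        · rw [← h2]; exact Or.inr (Or.inr h1)
        · obtain ⟨u, hu1, hu2⟩ := h1
          obtain ⟨v, hv1, hv2⟩ := h2
          rw [hu1] at hv1
          have : u = v := Subtype.ext (Sum.inl.inj hv1)
          rw [hu2, this, hv2]; exact Or.inl rfl
        · obtain ⟨u, hu1, hu2⟩ := h1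
          obtain ⟨v, hv1, hv2⟩ := h2
          rw [hu1] at hv2; exact absurd hv2 (by simp)
  · intro h
    rcases h with h | h | h
    · rw [h]; exact Relation.EqvGen.refl b
    · exact Relation.EqvGen.rel a b h
    · exact Relation.EqvGen.symm _ _ (Relation.EqvGen.rel b a h)

theorem mk_eq_mk (G : GluingStructure M N) {a b : M ⊕ N} :
    Quot.mk G.rel a = Quot.mk G.rel b ↔ G.R a b := by
  rw [Quot.eq, eqvGen_iff]

theorem gi_def (G : GluingStructure M N) (m : M) :
    G.gi m = Quot.mk G.rel (Sum.inl m) := rfl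

theorem gj_def (G : GluingStructure M N) (n : N) :
    G.gj n = Quot.mk G.rel (Sum.inr n) := rfl

theorem gi_eq_gi (G : GluingStructure M N) {a b : M} : G.gi a = G.gi b ↔ a = b := by
  rw [gi, gi, mk_eq_mk]
  constructor
  · rintro (h | ⟨u, hu1, hu2⟩ | ⟨u, hu1, hu2⟩)
    · exact Sum.inl.inj h
    · exact absurd hu2 (by simp)
    · exact absurd hu2 (by simp)
  · intro h; exact Or.inl (by rw [h])

theorem gj_eq_gj (G : GluingStructure M N) {a b : N} : G.gj a = G.gj b ↔ a = b := by
  rw [gj, gj, mk_eq_mk]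
  constructor
  · rintro (h | ⟨u, hu1, hu2⟩ | ⟨u, hu1, hu2⟩)
    · exact Sum.inr.inj h
    · exact absurd hu1 (by simp)
    · exact absurd hu1 (by simp)
  · intro h; exact Or.inl (by rw [h])

theorem gi_eq_gj (G : GluingStructure M N) {a : M} {b : N} :
    G.gi a = G.gj b ↔ ∃ u : G.U, a = (u : M) ∧ b = ((G.ξ u : G.V) : N) := by
  rw [gi, gj, mk_eq_mk]
  constructor
  · rintro (h | ⟨u, hu1, hu2⟩ | ⟨u, hu1, hu2⟩)
    · exact absurd h (by simp)
    · exact ⟨u, Sum.inl.inj hu1, Sum.inr.inj hu2⟩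
    · exact absurd hu1 (by simp)
  · rintro ⟨u, h1, h2⟩
    exact Or.inr (Or.inl ⟨u, by rw [h1], by rw [h2]⟩)

/-- The image in `N` of the part of `W` inside `U`. -/
def shadowM (G : GluingStructure M N) (W : Set M) : Set N :=
  Subtype.val '' (G.ξ '' (Subtype.val ⁻¹' W))

/-- The image in `M` of the part of `X` inside `V`. -/
def shadowN (G : GluingStructure M N) (X : Set N) : Set M :=
  Subtype.val '' (G.ξ.symm '' (Subtype.val ⁻¹' X))

theorem isOpen_gi_image (G : GluingStructure M N) (hV : IsOpen G.V)
    {W : Set M} (hW : IsOpen W) : IsOpen (G.gi '' W) := by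
  have hpre : Quot.mk G.rel ⁻¹' (G.gi '' W)
      = Sum.inl '' W ∪ Sum.inr '' G.shadowM W := by
    ext a
    simp only [Set.mem_preimage, Set.mem_image, Set.mem_union]
    constructor
    · rintro ⟨m, hm, hq⟩
      rw [G.gi_def] at hq
      have : G.R a (Sum.inl m) := G.mk_eq_mk.mp hq.symm
      rcases this with h | ⟨u, hu1, hu2⟩ | ⟨u, hu1, hu2⟩
      · exact Or.inl ⟨m, hm, h.symm⟩
      · exact absurd hu2 (by simp)
      · refine Or.inr ⟨(G.ξ u : N), ?_, hu2.symm⟩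
        refine ⟨G.ξ u, ⟨u, ?_, rfl⟩, rfl⟩
        simp only [Set.mem_preimage]
        have : m = (u : M) := Sum.inl.inj hu1
        rwa [← this]
    · rintro (⟨m, hm, ha⟩ | ⟨n, hn, ha⟩)
      · exact ⟨m, hm, by rw [← ha]; exact rfl⟩
      · obtain ⟨v, ⟨u, hu, rfl⟩, rfl⟩ := hn
        refine ⟨(u : M), hu, ?_⟩
        rw [← ha, G.gi_def, G.mk_eq_mk]
        exact Or.inr (Or.inl ⟨u, rfl, rfl⟩)
  have hshadow : IsOpen (G.shadowM W) :=
    hV.isOpenMap_subtype_val _ (G.ξ.isOpenMap _ (hW.preimage continuous_subtype_val))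
  have : IsOpen (Quot.mk G.rel ⁻¹' (G.gi '' W)) := by
    rw [hpre, isOpen_sum_iff]
    constructor
    · convert hW using 1
      ext m
      simp [Set.mem_preimage, GluingStructure.shadowM]
    · convert hshadow using 1
      ext n
      simp [Set.mem_preimage]
  exact isQuotientMap_quot_mk.isOpen_preimage.mp this

theorem isOpen_gj_image (G : GluingStructure M N) (hU : IsOpen G.U)
    {X : Set N} (hX : IsOpen X) : IsOpen (G.gj '' X) := by
  have hpre : Quot.mk G.rel ⁻¹' (G.gj '' X)
      = Sum.inl '' G.shadowN X ∪ Sum.inr '' X := by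
    ext a
    simp only [Set.mem_preimage, Set.mem_image, Set.mem_union]
    constructor
    · rintro ⟨n, hn, hq⟩
      rw [G.gj_def] at hq
      have : G.R a (Sum.inr n) := G.mk_eq_mk.mp hq.symm
      rcases this with h | ⟨u, hu1, hu2⟩ | ⟨u, hu1, hu2⟩
      · exact Or.inr ⟨n, hn, h.symm⟩
      · refine Or.inl ⟨(u : M), ?_, hu1.symm⟩
        refine ⟨u, ⟨G.ξ u, ?_, by simp⟩, rfl⟩
        simp only [Set.mem_preimage]
        have : n = ((G.ξ u : G.V) : N) := Sum.inr.inj hu2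
        rwa [← this]
      · exact absurd hu1 (by simp)
    · rintro (⟨m, hm, ha⟩ | ⟨n, hn, ha⟩)
      · obtain ⟨u, ⟨v, hv, huv⟩, rfl⟩ := hm
        refine ⟨(v : N), hv, ?_⟩
        rw [← ha, G.gj_def, G.mk_eq_mk]
        refine Or.inr (Or.inr ⟨u, rfl, ?_⟩)
        rw [← huv]; simp
      · exact ⟨n, hn, by rw [← ha]; exact rfl⟩
  have hshadow : IsOpen (G.shadowN X) :=
    hU.isOpenMap_subtype_val _ (G.ξ.symm.isOpenMap _ (hX.preimage continuous_subtype_val))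
  have : IsOpen (Quot.mk G.rel ⁻¹' (G.gj '' X)) := by
    rw [hpre, isOpen_sum_iff]
    constructor
    · convert hshadow using 1
      ext m
      simp [Set.mem_preimage]
    · convert hX using 1
      ext n
      simp [Set.mem_preimage, GluingStructure.shadowN]
  exact isQuotientMap_quot_mk.isOpen_preimage.mp this

end GluingStructure

/-- A Hausdorff gluing structure (no sequence in `U` converging in `M` to a point
outside `U` whose `ξ`-image converges in `N` to a point outside `V`) on Hausdorff
first-countable spaces yields a Hausdorff glued space. -/
theorem glued_space_hausdorff
    {M N : Type*} [TopologicalSpace M] [TopologicalSpace N]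
    [T2Space M] [T2Space N]
    [FirstCountableTopology M]
    [FirstCountableTopology N]
    (G : GluingStructure M N) (hU : IsOpen G.U) (hV : IsOpen G.V)
    (hHaus : ¬ ∃ (p : ℕ → G.U) (m : M) (n : N), m ∉ G.U ∧ n ∉ G.V ∧
      Filter.Tendsto (fun k => ((p k : M))) Filter.atTop (nhds m) ∧
      Filter.Tendsto (fun k => ((G.ξ (p k) : G.V) : N)) Filter.atTop (nhds n)) :
    T2Space G.Glued := by
  -- separation of two points coming from M
  have sepMM : ∀ m m' : M, m ≠ m' → ∃ o₁ o₂ : Set G.Glued,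
      IsOpen o₁ ∧ IsOpen o₂ ∧ G.gi m ∈ o₁ ∧ G.gi m' ∈ o₂ ∧ Disjoint o₁ o₂ := by
    intro m m' hne
    obtain ⟨W, W', hW, hW', hm, hm', hd⟩ := t2_separation hne
    refine ⟨G.gi '' W, G.gi '' W', G.isOpen_gi_image hV hW, G.isOpen_gi_image hV hW',
      ⟨m, hm, rfl⟩, ⟨m', hm', rfl⟩, ?_⟩
    rw [Set.disjoint_left]
    rintro z ⟨a, ha, rfl⟩ ⟨b, hb, hab⟩
    have : b = a := G.gi_eq_gi.mp hab
    exact Set.disjoint_left.mp hd ha (this ▸ hb)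
  have sepNN : ∀ n n' : N, n ≠ n' → ∃ o₁ o₂ : Set G.Glued,
      IsOpen o₁ ∧ IsOpen o₂ ∧ G.gj n ∈ o₁ ∧ G.gj n' ∈ o₂ ∧ Disjoint o₁ o₂ := by
    intro n n' hne
    obtain ⟨X, X', hX, hX', hn, hn', hd⟩ := t2_separation hne
    refine ⟨G.gj '' X, G.gj '' X', G.isOpen_gj_image hU hX, G.isOpen_gj_image hU hX',
      ⟨n, hn, rfl⟩, ⟨n', hn', rfl⟩, ?_⟩
    rw [Set.disjoint_left]
    rintro z ⟨a, ha, rfl⟩ ⟨b, hb, hab⟩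
    have : b = a := G.gj_eq_gj.mp hab
    exact Set.disjoint_left.mp hd ha (this ▸ hb)
  -- separation of a point of M \ U from a point of N \ V
  have sepMN : ∀ m : M, m ∉ G.U → ∀ n : N, n ∉ G.V → ∃ o₁ o₂ : Set G.Glued,
      IsOpen o₁ ∧ IsOpen o₂ ∧ G.gi m ∈ o₁ ∧ G.gj n ∈ o₂ ∧ Disjoint o₁ o₂ := by
    intro m hm n hn
    -- find neighborhoods W of m and X of n with no u ∈ U ∩ W such that ξ u ∈ X
    have key : ∃ W ∈ nhds m, ∃ X ∈ nhds n,
        ∀ u : G.U, (u : M) ∈ W → ((G.ξ u : G.V) : N) ∉ X := by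
      by_contra hcon
      push_neg at hcon
      obtain ⟨Wb, hWb⟩ := Filter.exists_antitone_basis (nhds m)
      obtain ⟨Xb, hXb⟩ := Filter.exists_antitone_basis (nhds n)
      have hsel : ∀ k : ℕ, ∃ u : G.U, (u : M) ∈ Wb k ∧ ((G.ξ u : G.V) : N) ∈ Xb k := by
        intro k
        obtain ⟨u, hu1, hu2⟩ := hcon (Wb k) (hWb.toHasBasis.mem_of_mem trivial)
          (Xb k) (hXb.toHasBasis.mem_of_mem trivial)
        exact ⟨u, hu1, hu2⟩
      choose p hp1 hp2 using hsel
      exact hHaus ⟨p, m, n, hm, hn, hWb.tendsto hp1, hXb.tendsto hp2⟩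
    obtain ⟨W, hWmem, X, hXmem, hkey⟩ := key
    obtain ⟨W', hW'sub, hW'open, hmW'⟩ := mem_nhds_iff.mp hWmem
    obtain ⟨X', hX'sub, hX'open, hnX'⟩ := mem_nhds_iff.mp hXmem
    refine ⟨G.gi '' W', G.gj '' X', G.isOpen_gi_image hV hW'open,
      G.isOpen_gj_image hU hX'open, ⟨m, hmW', rfl⟩, ⟨n, hnX', rfl⟩, ?_⟩
    rw [Set.disjoint_left]
    rintro z ⟨a, ha, rfl⟩ ⟨b, hb, hab⟩
    obtain ⟨u, rfl, rfl⟩ := G.gi_eq_gj.mp hab.symm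
    exact hkey u (hW'sub ha) (hX'sub hb)
  refine ⟨fun x y hxy => ?_⟩
  induction x using Quot.ind with
  | _ a =>
  induction y using Quot.ind with
  | _ b =>
  rcases a with m | n <;> rcases b with m' | n'
  · exact sepMM m m' (fun h => hxy (by rw [h]))
  · -- gi m vs gj n'
    by_cases hmU : m ∈ G.U
    · have hx : Quot.mk G.rel (Sum.inl m) = G.gj ((G.ξ ⟨m, hmU⟩ : G.V) : N) :=
        G.gi_eq_gj.mpr ⟨⟨m, hmU⟩, rfl, rfl⟩
      have hne : ((G.ξ ⟨m, hmU⟩ : G.V) : N) ≠ n' := fun h => hxy (by rw [hx, h]; rfl)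
      obtain ⟨o₁, o₂, h1, h2, h3, h4, h5⟩ := sepNN _ _ hne
      exact ⟨o₁, o₂, h1, h2, hx ▸ h3, h4, h5⟩
    · by_cases hnV : n' ∈ G.V
      · have hy : Quot.mk G.rel (Sum.inr n') = G.gi ((G.ξ.symm ⟨n', hnV⟩ : G.U) : M) := by
          refine (G.gi_eq_gj.mpr ⟨G.ξ.symm ⟨n', hnV⟩, rfl, ?_⟩).symm
          simp
        have hne : m ≠ ((G.ξ.symm ⟨n', hnV⟩ : G.U) : M) := by
          intro h
          exact hxy (by rw [hy, h]; rfl)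
        obtain ⟨o₁, o₂, h1, h2, h3, h4, h5⟩ := sepMM _ _ hne
        exact ⟨o₁, o₂, h1, h2, h3, hy ▸ h4, h5⟩
      · exact sepMN m hmU n' hnV
  · -- gj n vs gi m'
    by_cases hmU : m' ∈ G.U
    · have hx : Quot.mk G.rel (Sum.inl m') = G.gj ((G.ξ ⟨m', hmU⟩ : G.V) : N) :=
        G.gi_eq_gj.mpr ⟨⟨m', hmU⟩, rfl, rfl⟩
      have hne : n ≠ ((G.ξ ⟨m', hmU⟩ : G.V) : N) := fun h => hxy (by rw [hx, h]; rfl)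
      obtain ⟨o₁, o₂, h1, h2, h3, h4, h5⟩ := sepNN _ _ hne
      exact ⟨o₁, o₂, h1, h2, h3, hx ▸ h4, h5⟩
    · by_cases hnV : n ∈ G.V
      · have hy : Quot.mk G.rel (Sum.inr n) = G.gi ((G.ξ.symm ⟨n, hnV⟩ : G.U) : M) := by
          refine (G.gi_eq_gj.mpr ⟨G.ξ.symm ⟨n, hnV⟩, rfl, ?_⟩).symm
          simp
        have hne : ((G.ξ.symm ⟨n, hnV⟩ : G.U) : M) ≠ m' := by
          intro h
          exact hxy (by rw [hy, h]; rfl)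
        obtain ⟨o₁, o₂, h1, h2, h3, h4, h5⟩ := sepMM _ _ hne
        exact ⟨o₁, o₂, h1, h2, hy ▸ h3, h4, h5⟩
      · obtain ⟨o₁, o₂, h1, h2, h3, h4, h5⟩ := sepMN m' hmU n hnV
        exact ⟨o₂, o₁, h2, h1, h4, h3, h5.symm⟩
  · exact sepNN n n' (fun h => hxy (by rw [h]))
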